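/- Let 1 < p < ∞ and r, s be nonzero real numbers. The operator B(r,s) on l_p, defined by (B(r,s)x)_n = s x_{n-1} + r x_n (with x_{-1} := 0), is a bounded linear operator whose operator norm satisfies (|r|^p + |s|^p)^{1/p} ≤ ‖B(r,s)‖ ≤ |r| + |s|. -/

import Mathlib

open scoped ENNReal

/-!
Write `B(r,s) = r • 1 + s • S`, where `S` is the right shift. For `p < ∞` the shift is an isometry
of `ℓ^p`, so the triangle inequality gives `‖B(r,s)‖ ≤ |r| + |s|`. On the other hand `B(r,s)` maps
the unit vector `e₀` to `r e₀ + s e₁`, whose `ℓ^p` norm is `(|r|^p + |s|^p)^(1/p)`.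
-/

def seqShiftRight {M : Type*} [Zero M] (x : ℕ → M) : ℕ → M
  | 0 => 0
  | n + 1 => x n

section seqShiftRight

variable {M : Type*}

@[simp] lemma seqShiftRight_zero [Zero M] (x : ℕ → M) : seqShiftRight x 0 = 0 := rfl

@[simp] lemma seqShiftRight_succ [Zero M] (x : ℕ → M) (n : ℕ) :
    seqShiftRight x (n + 1) = x n := rfl

lemma hasSum_seqShiftRight_iff [AddCommMonoid M] [TopologicalSpace M] {x : ℕ → M} {a : M} :
    HasSum (seqShiftRight x) a ↔ HasSum x a := by
  refine (Nat.succ_injective.hasSum_iff fun n hn => ?_).symm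
  cases n with
  | zero => rfl
  | succ n => exact absurd ⟨n, rfl⟩ hn

lemma seqShiftRight_comp {N : Type*} [Zero M] [Zero N] {f : M → N} (hf : f 0 = 0) (x : ℕ → M) :
    f ∘ seqShiftRight x = seqShiftRight (f ∘ x) := by
  ext (_ | n) <;> simp [hf]

lemma seqShiftRight_add [AddZeroClass M] (x y : ℕ → M) :
    seqShiftRight (x + y) = seqShiftRight x + seqShiftRight y := by
  ext (_ | n) <;> simp

lemma seqShiftRight_smul {R : Type*} [Zero M] [SMulZeroClass R M] (c : R) (x : ℕ → M) :
    seqShiftRight (c • x) = c • seqShiftRight x := by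
  ext (_ | n) <;> simp

end seqShiftRight

namespace lp

variable {𝕜 E : Type*} [NontriviallyNormedField 𝕜] [NormedAddCommGroup E] [NormedSpace 𝕜 E]
  {p : ℝ≥0∞}

lemma hasSum_norm_rpow_seqShiftRight (hp : 0 < p.toReal) (x : lp (fun _ : ℕ => E) p) :
    HasSum (fun n => ‖seqShiftRight x n‖ ^ p.toReal) (‖x‖ ^ p.toReal) := by
  have h_norms : (fun n => ‖seqShiftRight x n‖ ^ p.toReal)
      = seqShiftRight fun n => ‖x n‖ ^ p.toReal :=
    seqShiftRight_comp (f := fun e : E => ‖e‖ ^ p.toReal) (by simp [hp.ne']) x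
  rw [h_norms, hasSum_seqShiftRight_iff]
  exact hasSum_norm hp x

variable [Fact (1 ≤ p)]

variable (𝕜) in
def rightShift (hp : 0 < p.toReal) : lp (fun _ : ℕ => E) p →ₗᵢ[𝕜] lp (fun _ : ℕ => E) p where
  toFun x := ⟨seqShiftRight x, memℓp_gen (hasSum_norm_rpow_seqShiftRight hp x).summable⟩
  map_add' x y := Subtype.ext (seqShiftRight_add x y)
  map_smul' c x := Subtype.ext (seqShiftRight_smul c x)
  norm_map' x := (Real.rpow_left_inj (norm_nonneg _) (norm_nonneg _) hp.ne').mp <|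
    (hasSum_norm hp _).unique (hasSum_norm_rpow_seqShiftRight hp x)

noncomputable def lowerBidiagonal (hp : 0 < p.toReal) (r s : 𝕜) :
    lp (fun _ : ℕ => E) p →L[𝕜] lp (fun _ : ℕ => E) p :=
  r • ContinuousLinearMap.id 𝕜 _ + s • (rightShift 𝕜 hp).toContinuousLinearMap

variable (hp : 0 < p.toReal) (r s : 𝕜)

lemma coe_lowerBidiagonal (x : lp (fun _ : ℕ => E) p) :
    (lowerBidiagonal hp r s x : ℕ → E) = r • ⇑x + s • seqShiftRight ⇑x := rfl

lemma lowerBidiagonal_apply_zero (x : lp (fun _ : ℕ => E) p) :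
    lowerBidiagonal hp r s x 0 = r • x 0 := by
  simp [coe_lowerBidiagonal]

lemma lowerBidiagonal_apply_succ (x : lp (fun _ : ℕ => E) p) (n : ℕ) :
    lowerBidiagonal hp r s x (n + 1) = s • x n + r • x (n + 1) := by
  simp [coe_lowerBidiagonal, add_comm]

open ContinuousLinearMap in
lemma norm_lowerBidiagonal_le :
    ‖(lowerBidiagonal hp r s : lp (fun _ : ℕ => E) p →L[𝕜] lp (fun _ : ℕ => E) p)‖ ≤ ‖r‖ + ‖s‖ :=
  calc _ ≤ ‖r‖ * ‖ContinuousLinearMap.id 𝕜 (lp (fun _ : ℕ => E) p)‖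
        + ‖s‖ * ‖(rightShift 𝕜 hp (E := E)).toContinuousLinearMap‖ :=
        (opNorm_add_le _ _).trans (add_le_add (opNorm_smul_le _ _) (opNorm_smul_le _ _))
    _ ≤ ‖r‖ * 1 + ‖s‖ * 1 := by
        gcongr
        exacts [norm_id_le, LinearIsometry.norm_toContinuousLinearMap_le _]
    _ = ‖r‖ + ‖s‖ := by simp

lemma norm_lowerBidiagonal_single_zero (e : E) :
    ‖lowerBidiagonal hp r s (lp.single (E := fun _ : ℕ => E) p 0 e)‖ ^ p.toReal
      = (‖r‖ ^ p.toReal + ‖s‖ ^ p.toReal) * ‖e‖ ^ p.toReal := by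
  refine (hasSum_norm hp _).unique ?_
  convert hasSum_sum_of_ne_finset_zero (L := .unconditional ℕ) (s := Finset.range 2) ?_ using 1
  · simp [Finset.sum_range_succ, lowerBidiagonal_apply_zero, lowerBidiagonal_apply_succ,
      norm_smul, Real.mul_rpow]
    ring
  · rintro (_ | _ | n) hn
    · simp at hn
    · simp at hn
    · simp [lowerBidiagonal_apply_succ, hp.ne']

lemma rpow_add_rpow_rpow_le_norm_lowerBidiagonal [Nontrivial E] :
    (‖r‖ ^ p.toReal + ‖s‖ ^ p.toReal) ^ (1 / p.toReal)
      ≤ ‖(lowerBidiagonal hp r s : lp (fun _ : ℕ => E) p →L[𝕜] lp (fun _ : ℕ => E) p)‖ := by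
  obtain ⟨e, he⟩ := exists_ne (0 : E)
  have h_single : ‖lp.single (E := fun _ : ℕ => E) p 0 e‖ = ‖e‖ := by
    simp [(ENNReal.toReal_pos_iff.mp hp).1]
  have h_image : ‖lowerBidiagonal hp r s (lp.single (E := fun _ : ℕ => E) p 0 e)‖
      = (‖r‖ ^ p.toReal + ‖s‖ ^ p.toReal) ^ (1 / p.toReal) * ‖e‖ := by
    rw [← Real.rpow_rpow_inv (norm_nonneg _) hp.ne', norm_lowerBidiagonal_single_zero,
      Real.mul_rpow (by positivity) (by positivity), Real.rpow_rpow_inv (norm_nonneg e) hp.ne',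
      one_div]
  refine le_of_mul_le_mul_right ?_ (norm_pos_iff.mpr he)
  rw [← h_image, ← h_single]
  exact ContinuousLinearMap.le_opNorm _ _

end lp

theorem stmt1 (p : ℝ≥0∞) [Fact (1 ≤ p)] (hpt : p ≠ ⊤)
    (r s : ℝ) :
    ∃ T : lp (fun _ : ℕ => ℂ) p →L[ℂ] lp (fun _ : ℕ => ℂ) p,
      (∀ x : lp (fun _ : ℕ => ℂ) p,
        (T x : ∀ _ : ℕ, ℂ) 0 = (r : ℂ) * (x : ∀ _ : ℕ, ℂ) 0 ∧
        ∀ n : ℕ, (T x : ∀ _ : ℕ, ℂ) (n + 1)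
          = (s : ℂ) * (x : ∀ _ : ℕ, ℂ) n + (r : ℂ) * (x : ∀ _ : ℕ, ℂ) (n + 1)) ∧
      (|r| ^ p.toReal + |s| ^ p.toReal) ^ (1 / p.toReal) ≤ ‖T‖ ∧ ‖T‖ ≤ |r| + |s| := by
  have hp : 0 < p.toReal := ENNReal.toReal_pos (zero_lt_one.trans_le Fact.out).ne' hpt
  have h_lower := lp.rpow_add_rpow_rpow_le_norm_lowerBidiagonal (E := ℂ) hp (r : ℂ) s
  have h_upper := lp.norm_lowerBidiagonal_le (E := ℂ) hp (r : ℂ) s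
  simp only [Complex.norm_real, Real.norm_eq_abs] at h_lower h_upper
  exact ⟨lp.lowerBidiagonal hp (r : ℂ) s, fun x => ⟨lp.lowerBidiagonal_apply_zero hp (r : ℂ) s x,
    lp.lowerBidiagonal_apply_succ hp (r : ℂ) s x⟩, h_lower, h_upper⟩
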